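/- Suppose q>2. Then for every 2≤i≤d, one has Γ^{[i]} = Γ^{[i−1]} □ Γ^i, i.e., for all α,β∈S^{i−1} and e,f∈S, ((α,e),(β,f)) is an arc of Γ^{[i]} if and only if (e=f and (α,β) is an arc of Γ^{[i−1]}) or (α=β and (e,f) is an arc of Γ^i). -/

import Mathlib

namespace Paper

/-- A digraph: a set of vertices together with a set of arcs (ordered pairs of
distinct vertices). -/
structure Digraph (V : Type*) where
  Adj : V → V → Prop
  loopless : ∀ v : V, ¬ Adj v v

variable {V V' : Type*}

namespace Digraph

/-- There is a directed walk of length `n` from `x` to `y`. -/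
def HasPath (G : Digraph V) (x y : V) (n : ℕ) : Prop :=
  ∃ f : ℕ → V, f 0 = x ∧ f n = y ∧ ∀ k < n, G.Adj (f k) (f (k + 1))

/-- The distance `∂(x,y)`: the length of a shortest directed path from `x` to `y`. -/
noncomputable def dist (G : Digraph V) (x y : V) : ℕ :=
  sInf {n | G.HasPath x y n}

/-- The two-way distance `∂̃(x,y) = (∂(x,y), ∂(y,x))`. -/
noncomputable def tdist (G : Digraph V) (x y : V) : ℕ × ℕ :=
  (G.dist x y, G.dist y x)

/-- The two-way distance set `∂̃(Γ)`. -/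
def tdSet (G : Digraph V) : Set (ℕ × ℕ) :=
  {p | ∃ x y : V, G.tdist x y = p}

def StronglyConnected (G : Digraph V) : Prop :=
  ∀ x y : V, ∃ n, G.HasPath x y n

/-- `P_{ĩ,j̃}(x,y)`: the set of `z` with `∂̃(x,z) = ĩ` and `∂̃(z,y) = j̃`. -/
def P (G : Digraph V) (i j : ℕ × ℕ) (x y : V) : Set V :=
  {z | G.tdist x z = i ∧ G.tdist z y = j}

open Classical in
/-- The intersection number `p^{h̃}_{ĩ,j̃}`, defined using an arbitrarily chosen
pair at two-way distance `h̃` (and `0` if there is no such pair). -/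
noncomputable def p (G : Digraph V) (h i j : ℕ × ℕ) : ℕ :=
  if hh : ∃ xy : V × V, G.tdist xy.1 xy.2 = h then
    Nat.card (G.P i j hh.choose.1 hh.choose.2)
  else 0

/-- A weakly distance-regular digraph: strongly connected, and
`|P_{ĩ,j̃}(x,y)|` depends only on `∂̃(x,y)`, `ĩ` and `j̃`. -/
def IsWDR (G : Digraph V) : Prop :=
  G.StronglyConnected ∧
    ∀ (i j : ℕ × ℕ) (x y : V), Nat.card (G.P i j x y) = G.p (G.tdist x y) i j

/-- Commutativity: `p^{h̃}_{ĩ,j̃} = p^{h̃}_{j̃,ĩ}` for all `h̃,ĩ,j̃ ∈ ∂̃(Γ)`. -/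
def IsCommutative (G : Digraph V) : Prop :=
  ∀ h i j : ℕ × ℕ, h ∈ G.tdSet → i ∈ G.tdSet → j ∈ G.tdSet → G.p h i j = G.p h j i

/-- `Γ` is an undirected graph, i.e. its arc set is symmetric. -/
def IsUndirected (G : Digraph V) : Prop :=
  ∀ x y : V, G.Adj x y → G.Adj y x

def IsSemicomplete (G : Digraph V) : Prop :=
  ∀ x y : V, x ≠ y → (G.Adj x y ∨ G.Adj y x)

/-- `Γ` is a complete (undirected) graph. -/
def IsCompleteDigraph (G : Digraph V) : Prop :=
  ∀ x y : V, x ≠ y → (G.Adj x y ∧ G.Adj y x)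

/-- The underlying graph of a digraph. -/
def underlying (G : Digraph V) : SimpleGraph V where
  Adj x y := G.Adj x y ∨ G.Adj y x
  symm := ⟨fun _ _ h => h.symm⟩
  loopless := ⟨fun x h => h.elim (G.loopless x) (G.loopless x)⟩

/-- The diameter: the maximum value of the distance function. -/
noncomputable def diameter (G : Digraph V) : ℕ :=
  sSup {n | ∃ x y : V, G.dist x y = n}

/-- The girth: the length of a shortest circuit. -/
noncomputable def girth (G : Digraph V) : ℕ :=
  sInf {n | 0 < n ∧ ∃ x : V, G.HasPath x x n}

/-- Number of out-neighbours `d⁺(x)`. -/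
noncomputable def outDeg (G : Digraph V) (x : V) : ℕ := Nat.card {y | G.Adj x y}

/-- Number of in-neighbours `d⁻(x)`. -/
noncomputable def inDeg (G : Digraph V) (x : V) : ℕ := Nat.card {y | G.Adj y x}

def IsIsomorphicTo (G : Digraph V) (G' : Digraph V') : Prop :=
  ∃ e : V ≃ V', ∀ x y : V, G.Adj x y ↔ G'.Adj (e x) (e y)

/-- The Cartesian product of two digraphs. -/
def box (G : Digraph V) (G' : Digraph V') : Digraph (V × V') where
  Adj x y := (x.1 = y.1 ∧ G'.Adj x.2 y.2) ∨ (G.Adj x.1 y.1 ∧ x.2 = y.2)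
  loopless := fun v h => h.elim (fun h' => G'.loopless v.2 h'.2) (fun h' => G.loopless v.1 h'.1)

/-- Two digraphs have the same intersection numbers. -/
def SameIntersectionNumbers (G : Digraph V) (G' : Digraph V') : Prop :=
  G.tdSet = G'.tdSet ∧
    ∀ h i j : ℕ × ℕ, h ∈ G.tdSet → i ∈ G.tdSet → j ∈ G.tdSet → G.p h i j = G'.p h i j

/-- Induced subdigraph on a set of vertices. -/
def induce (G : Digraph V) (s : Set V) : Digraph s where
  Adj x y := G.Adj x.1 y.1
  loopless := fun v h => G.loopless v.1 h

end Digraph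

/-- The Cartesian product of a family of digraphs. -/
def piBox {ι : Type*} {W : ι → Type*} (G : ∀ i, Digraph (W i)) : Digraph (∀ i, W i) where
  Adj x y := ∃ i, (G i).Adj (x i) (y i) ∧ ∀ j, j ≠ i → x j = y j
  loopless := by
    rintro v ⟨i, hi, -⟩
    exact (G i).loopless _ hi

/-- The Cayley digraph `Cay(A,S)` of an additive group (for `S ⊆ A ∖ {0}`). -/
def Cay (A : Type*) [AddGroup A] (S : Set A) : Digraph A where
  Adj x y := x ≠ y ∧ y - x ∈ S
  loopless := fun _ h => h.1 rfl

/-- The Cayley graph of an additive group with respect to a symmetric connection set. -/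
def cayleyGraph (A : Type*) [AddGroup A] (S : Set A) : SimpleGraph A where
  Adj x y := x ≠ y ∧ (y - x ∈ S ∨ x - y ∈ S)
  symm := ⟨fun _ _ h => ⟨h.1.symm, h.2.symm⟩⟩
  loopless := ⟨fun _ h => h.1 rfl⟩

/-- The Hamming graph `H(ι, S)`: vertices are tuples, adjacent iff they differ in
exactly one coordinate. -/
def hammingGraph (ι : Type*) (S : Type*) : SimpleGraph (ι → S) where
  Adj x y := ∃ i, x i ≠ y i ∧ ∀ j, j ≠ i → x j = y j
  symm := by
    constructor
    rintro x y ⟨i, h1, h2⟩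
    exact ⟨i, h1.symm, fun j hj => (h2 j hj).symm⟩
  loopless := by
    constructor
    rintro x ⟨i, h1, -⟩
    exact h1 rfl

/-- The folded `n`-cube: vertices are `(n-1)`-tuples over `ℤ₂`, adjacent iff they
differ in exactly one coordinate or in all `n-1` coordinates. -/
def foldedCube (n : ℕ) : SimpleGraph (Fin (n - 1) → ZMod 2) where
  Adj x y := (∃ i, x i ≠ y i ∧ ∀ j, j ≠ i → x j = y j) ∨ (x ≠ y ∧ ∀ j, x j ≠ y j)
  symm := by
    constructor
    rintro x y (⟨i, h1, h2⟩ | ⟨h1, h2⟩)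
    · exact Or.inl ⟨i, h1.symm, fun j hj => (h2 j hj).symm⟩
    · exact Or.inr ⟨h1.symm, fun j => (h2 j).symm⟩
  loopless := by
    constructor
    rintro x (⟨i, h1, -⟩ | ⟨h1, -⟩)
    · exact h1 rfl
    · exact h1 rfl

/-- The Cartesian product of a family of simple graphs. -/
def piBoxGraph {ι : Type*} {W : ι → Type*} (G : ∀ i, SimpleGraph (W i)) :
    SimpleGraph (∀ i, W i) where
  Adj x y := ∃ i, (G i).Adj (x i) (y i) ∧ ∀ j, j ≠ i → x j = y j
  symm := by
    constructor
    rintro x y ⟨i, h1, h2⟩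
    exact ⟨i, (G i).symm.symm _ _ h1, fun j hj => (h2 j hj).symm⟩
  loopless := by
    constructor
    rintro x ⟨i, h1, -⟩
    exact (G i).loopless.irrefl _ h1

/-- The Shrikhande graph `Cay(ℤ₄ × ℤ₄, {±(1,0), ±(0,1), ±(1,1)})`. -/
def shrikhande : SimpleGraph (ZMod 4 × ZMod 4) :=
  cayleyGraph (ZMod 4 × ZMod 4) {(1, 0), (-1, 0), (0, 1), (0, -1), (1, 1), (-1, -1)}

/-- The Doob graph `G(d₁, d₂)`: the Cartesian product of `d₁` copies of the
Shrikhande graph with the Hamming graph `H(d₂, 4)`. -/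
def doobGraph (d₁ d₂ : ℕ) :
    SimpleGraph ((Fin d₁ → ZMod 4 × ZMod 4) × (Fin d₂ → ZMod 4)) :=
  (piBoxGraph fun _ : Fin d₁ => shrikhande).boxProd (hammingGraph (Fin d₂) (ZMod 4))

/-- `c_i(x,y)`: the number of neighbours of `y` at distance `i - 1` from `x`. -/
noncomputable def cNum (G : SimpleGraph V) (i : ℕ) (x y : V) : ℕ :=
  Nat.card {z : V | G.Adj y z ∧ G.dist x z = i - 1}

/-- `a_i(x,y)`: the number of neighbours of `y` at distance `i` from `x`. -/
noncomputable def aNum (G : SimpleGraph V) (i : ℕ) (x y : V) : ℕ :=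
  Nat.card {z : V | G.Adj y z ∧ G.dist x z = i}

/-- `b_i(x,y)`: the number of neighbours of `y` at distance `i + 1` from `x`. -/
noncomputable def bNum (G : SimpleGraph V) (i : ℕ) (x y : V) : ℕ :=
  Nat.card {z : V | G.Adj y z ∧ G.dist x z = i + 1}

/-- A distance-regular graph. -/
def IsDRG (G : SimpleGraph V) : Prop :=
  G.Connected ∧
    ∀ (i : ℕ) (x y x' y' : V), G.dist x y = i → G.dist x' y' = i →
      cNum G i x y = cNum G i x' y' ∧ bNum G i x y = bNum G i x' y'

/-- A distance-transitive graph. -/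
def IsDistanceTransitive (G : SimpleGraph V) : Prop :=
  G.Connected ∧
    ∀ x y x' y' : V, G.dist x y = G.dist x' y' → ∃ σ : G ≃g G, σ x = x' ∧ σ y = y'

/-- The vertex set of `Γ_i(α)`: all tuples obtained from `α` by inserting an
arbitrary element of `S` in the `i`-th coordinate. -/
def lineSet {n : ℕ} {S : Type*} (i : Fin (n + 1)) (α : Fin n → S) : Set (Fin (n + 1) → S) :=
  Set.range fun b : S => i.insertNth b α

/-- The induced subdigraph `Γ_i(α)`. -/
def Digraph.line {n : ℕ} {S : Type*} (Γ : Digraph (Fin (n + 1) → S)) (i : Fin (n + 1))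
    (α : Fin n → S) : Digraph (lineSet i α) :=
  Γ.induce (lineSet i α)

/-- Pad a tuple of length `m` with the entry `o` to a tuple of length `d`. -/
def pad {S : Type*} (o : S) (d m : ℕ) (α : Fin m → S) : Fin d → S :=
  fun j => if h : j.1 < m then α ⟨j.1, h⟩ else o

/-- The digraph `Γ^{[m]}` on `S^m`: `(α,β)` is an arc iff the padded tuples form
an arc of `Γ`. -/
def Digraph.trunc {S : Type*} {d : ℕ} (Γ : Digraph (Fin d → S)) (o : S) (m : ℕ) :
    Digraph (Fin m → S) where
  Adj α β := Γ.Adj (pad o d m α) (pad o d m β)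
  loopless := fun _ h => Γ.loopless _ h

/-- The digraph `Γ^i` on `S`: `(a,b)` is an arc iff the tuples with `a` resp. `b`
in the `i`-th coordinate and `o` elsewhere form an arc of `Γ`. -/
def Digraph.coordDigraph {S : Type*} {d : ℕ} (Γ : Digraph (Fin d → S)) (o : S) (i : Fin d) :
    Digraph S where
  Adj a b := Γ.Adj (Function.update (fun _ => o) i a) (Function.update (fun _ => o) i b)
  loopless := fun _ h => Γ.loopless _ h

/-- The set `T = S^{m-1} × {(o,…,o)}` (as a subset of `S^{d-1}`, here `d = n+1`). -/
def Tset {n : ℕ} (S : Type*) (o : S) (m : ℕ) : Set (Fin n → S) :=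
  {α | ∀ j : Fin n, m - 1 ≤ j.1 → α j = o}

end Paper

/-!
In the Hamming graph two vertices at distance 2 have exactly two common neighbours, so
commutativity (`p^h_{i,j} = p^h_{j,i}`) forces the two paths of length 2 through them to carry
the same pair of two-way distances up to order. Applied to both diagonals of a square this says:
parallel edges of a square have the same type, unless the square is a directed 4-cycle.

Along a ladder of parallel `j`-edges over a `k`-line, a mixed configuration therefore splits
the line into forward levels `F` and backward levels `B` with every pair `F × B` at two-way
distance `t = (1,s)`, `s ≠ 1`. Counting the paths of types `(t, tᵀ)` and `(tᵀ, t)` between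
two points of `F` and a point of `B` gives `|B| ≤ |B| - 1` unless `|F| ≤ 1`; symmetrically
`|B| ≤ 1`, contradicting `q > 2`. So arcs are invariant under parallel translation, `Γ` is the
Cartesian product of its coordinate digraphs `Γ^j`, and the lemma is a statement about
Cartesian products.
-/

namespace Paper

open Function

namespace Digraph

variable {V : Type*} {G : Digraph V} {x y : V}

theorem hasPath_zero_iff : G.HasPath x y 0 ↔ x = y :=
  ⟨fun ⟨_, h0, hn, _⟩ => h0 ▸ hn, fun h => ⟨fun _ => x, rfl, h, by simp⟩⟩

theorem hasPath_one_iff : G.HasPath x y 1 ↔ G.Adj x y := by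
  refine ⟨fun ⟨f, h0, h1, ha⟩ => h0 ▸ h1 ▸ ha 0 one_pos, fun h => ?_⟩
  refine ⟨fun n => if n = 0 then x else y, rfl, rfl, fun k hk => ?_⟩
  obtain rfl : k = 0 := by omega
  simpa using h

theorem dist_eq_one_iff : G.dist x y = 1 ↔ G.Adj x y := by
  refine ⟨fun h => hasPath_one_iff.1 (h ▸ Nat.sInf_mem (Nat.nonempty_of_sInf_eq_succ h)),
    fun h => le_antisymm (Nat.sInf_le (hasPath_one_iff.2 h)) (Nat.one_le_iff_ne_zero.2 ?_)⟩
  rw [dist, Ne, Nat.sInf_eq_zero, Set.eq_empty_iff_forall_notMem]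
  rintro (h0 | h0)
  · exact G.loopless x (hasPath_zero_iff.1 h0 ▸ h)
  · exact h0 1 (hasPath_one_iff.2 h)

theorem tdist_self (x : V) : G.tdist x x = (0, 0) := by
  have : G.dist x x = 0 := Nat.sInf_eq_zero.2 (Or.inl (hasPath_zero_iff.2 rfl))
  simp [tdist, this]

theorem tdist_swap (x y : V) : G.tdist y x = (G.tdist x y).swap := rfl

theorem underlying_adj_iff_tdist :
    G.underlying.Adj x y ↔ (G.tdist x y).1 = 1 ∨ (G.tdist x y).2 = 1 :=
  (dist_eq_one_iff.or dist_eq_one_iff).symm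

theorem ncard_P_comm (hwdr : G.IsWDR) (hcomm : G.IsCommutative) {i j : ℕ × ℕ}
    (hi : i ∈ G.tdSet) (hj : j ∈ G.tdSet) (x y : V) :
    (G.P i j x y).ncard = (G.P j i x y).ncard := by
  rw [← Nat.card_coe_set_eq, ← Nat.card_coe_set_eq, hwdr.2, hwdr.2,
    hcomm _ _ _ ⟨x, y, rfl⟩ hi hj]

section Finite

variable [Finite V]

theorem exists_tdist_swap (hwdr : G.IsWDR) (hcomm : G.IsCommutative) (x y z : V) :
    ∃ w, G.tdist x w = G.tdist z y ∧ G.tdist w y = G.tdist x z := by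
  have hne : (G.P (G.tdist x z) (G.tdist z y) x y).ncard ≠ 0 :=
    (Set.ncard_pos (Set.toFinite _)).2 ⟨z, (⟨rfl, rfl⟩ : z ∈ G.P _ _ x y)⟩ |>.ne'
  rw [ncard_P_comm hwdr hcomm ⟨_, _, rfl⟩ ⟨_, _, rfl⟩] at hne
  exact Set.nonempty_of_ncard_ne_zero hne

theorem tdist_common_neighbours (hwdr : G.IsWDR) (hcomm : G.IsCommutative) {w₁ w₂ : V}
    (hw : ∀ w, G.underlying.Adj x w ∧ G.underlying.Adj w y ↔ w = w₁ ∨ w = w₂) :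
    (G.tdist x w₁ = G.tdist w₁ y ∧ G.tdist x w₂ = G.tdist w₂ y) ∨
      (G.tdist x w₁ = G.tdist w₂ y ∧ G.tdist w₁ y = G.tdist x w₂) := by
  have swap_mem : ∀ w, w = w₁ ∨ w = w₂ → ∃ w', (w' = w₁ ∨ w' = w₂) ∧
      G.tdist x w' = G.tdist w y ∧ G.tdist w' y = G.tdist x w := by
    intro w hw'
    obtain ⟨hxw, hwy⟩ := (hw w).2 hw'
    obtain ⟨w', h₁, h₂⟩ := exists_tdist_swap hwdr hcomm x y w
    refine ⟨w', (hw w').1 ⟨?_, ?_⟩, h₁, h₂⟩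
    · rwa [underlying_adj_iff_tdist, h₁, ← underlying_adj_iff_tdist]
    · rwa [underlying_adj_iff_tdist, h₂, ← underlying_adj_iff_tdist]
  obtain ⟨w', hw', h₁, h₂⟩ := swap_mem w₁ (Or.inl rfl)
  rcases hw' with rfl | rfl
  · obtain ⟨w'', hw'', h₃, h₄⟩ := swap_mem w₂ (Or.inr rfl)
    rcases hw'' with rfl | rfl
    · exact Or.inr ⟨h₃, h₄⟩
    · exact Or.inl ⟨h₁, h₃⟩
  · exact Or.inr ⟨h₂.symm, h₁.symm⟩

theorem subsingleton_of_forall_tdist_eq (hwdr : G.IsWDR) (hcomm : G.IsCommutative)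
    {F B : Set V} {t : ℕ × ℕ} (hedge : t.1 = 1 ∨ t.2 = 1) (hasymm : t.1 ≠ t.2)
    (hclosed : ∀ x ∈ F ∪ B, ∀ y ∈ F ∪ B, x ≠ y →
      ∀ z, G.underlying.Adj x z → G.underlying.Adj z y → z ∈ F ∪ B)
    (hFB : ∀ p ∈ F, ∀ q ∈ B, G.tdist p q = t) (hB : B.Nonempty) : F.Subsingleton := by
  intro ν₁ h₁ ν₂ h₂
  by_contra hne
  obtain ⟨g, hg⟩ := hB
  have ht : t ≠ t.swap := fun h => hasymm (congrArg Prod.fst h)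
  have hself : ∀ x, G.tdist x x ≠ t.swap := by
    intro x h
    obtain ⟨h₁, h₂⟩ := Prod.ext_iff.1 h
    simp only [tdist_self, Prod.fst_swap, Prod.snd_swap] at h₁ h₂
    omega
  have hadj : ∀ {x y}, G.tdist x y = t ∨ G.tdist x y = t.swap → G.underlying.Adj x y := by
    intro x y h
    rw [underlying_adj_iff_tdist]
    rcases h with h | h <;> rw [h] <;> simpa [or_comm] using hedge
  have hν₁g : ν₁ ≠ g := by
    rintro rfl
    exact hself ν₁ (by rw [tdist_swap, hFB _ h₁ _ hg])
  have hsub₁ : B ⊆ G.P t t.swap ν₁ ν₂ := fun b hb =>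
    ⟨hFB _ h₁ _ hb, by rw [tdist_swap, hFB _ h₂ _ hb]⟩
  have hsub₂ : G.P t.swap t ν₁ ν₂ ⊆ G.P t.swap t ν₁ g := by
    rintro z ⟨hz₁, hz₂⟩
    have hzF : z ∈ F :=
      (hclosed _ (.inl h₁) _ (.inl h₂) hne z (hadj (.inr hz₁)) (hadj (.inl hz₂))).resolve_right
        fun hzB => ht ((hFB _ h₁ _ hzB).symm.trans hz₁)
    exact ⟨hz₁, hFB _ hzF _ hg⟩
  have hsub₃ : G.P t t.swap ν₁ g ⊆ B \ {g} := by
    rintro z ⟨hz₁, hz₂⟩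
    have hzB : z ∈ B :=
      (hclosed _ (.inl h₁) _ (.inr hg) hν₁g z (hadj (.inl hz₁)) (hadj (.inr hz₂))).resolve_left
        fun hzF => ht ((hFB _ hzF _ hg).symm.trans hz₂)
    exact ⟨hzB, fun hzg => hself g (hzg ▸ hz₂)⟩
  have htmem : t ∈ G.tdSet := ⟨_, _, hFB _ h₁ _ hg⟩
  have htmem' : t.swap ∈ G.tdSet := ⟨g, ν₁, by rw [tdist_swap, hFB _ h₁ _ hg]⟩
  have := calc B.ncard
      _ ≤ (G.P t t.swap ν₁ ν₂).ncard := Set.ncard_le_ncard hsub₁ (Set.toFinite _)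
      _ = (G.P t.swap t ν₁ ν₂).ncard := ncard_P_comm hwdr hcomm htmem htmem' _ _
      _ ≤ (G.P t.swap t ν₁ g).ncard := Set.ncard_le_ncard hsub₂ (Set.toFinite _)
      _ = (G.P t t.swap ν₁ g).ncard := ncard_P_comm hwdr hcomm htmem' htmem _ _
      _ ≤ (B \ {g}).ncard := Set.ncard_le_ncard hsub₃ (Set.toFinite _)
      _ < B.ncard := Set.ncard_sdiff_singleton_lt_of_mem hg (Set.toFinite _)
  exact lt_irrefl _ this

end Finite

end Digraph

section Hamming

variable {ι S : Type*} [DecidableEq ι]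

theorem hammingGraph_adj_update {x : ι → S} {i : ι} {c : S} (hc : c ≠ x i) :
    (hammingGraph ι S).Adj x (update x i c) :=
  ⟨i, by simpa using hc.symm, fun l hl => (update_of_ne hl c x).symm⟩

theorem hammingGraph_adj_and_adj_iff {u : ι → S} {j k : ι} (hjk : j ≠ k) {a b : S}
    (ha : a ≠ u j) (hb : b ≠ u k) (z : ι → S) :
    (hammingGraph ι S).Adj u z ∧ (hammingGraph ι S).Adj z (update (update u j a) k b) ↔
      z = update u j a ∨ z = update u k b := by
  constructor
  · rintro ⟨⟨i₁, -, h₁⟩, ⟨i₂, -, h₂⟩⟩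
    have hmem : ∀ l, u l ≠ update (update u j a) k b l → l = i₁ ∨ l = i₂ := by
      intro l hl
      by_contra! h
      exact hl ((h₁ l h.1).trans (h₂ l h.2))
    have hj := hmem j (by simpa [hjk] using ha.symm)
    have hk := hmem k (by simpa using hb.symm)
    rcases hj with rfl | rfl <;> rcases hk with rfl | rfl
    · exact absurd rfl hjk
    · refine Or.inl (eq_update_iff.2 ⟨?_, fun l hl => (h₁ l hl).symm⟩)
      simpa [hjk] using h₂ j hjk
    · refine Or.inr (eq_update_iff.2 ⟨?_, fun l hl => (h₁ l hl).symm⟩)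
      simpa using h₂ _ hjk.symm
    · exact absurd rfl hjk
  · rintro (rfl | rfl)
    · exact ⟨hammingGraph_adj_update ha, hammingGraph_adj_update (by simpa [hjk.symm] using hb)⟩
    · refine ⟨hammingGraph_adj_update hb, ?_⟩
      rw [update_comm hjk]
      exact hammingGraph_adj_update (by simpa [hjk] using ha)

theorem hammingGraph_mem_range_update {v : ι → S} {k : ι} {x y : ι → S}
    (hx : x ∈ Set.range (update v k)) (hy : y ∈ Set.range (update v k)) (hxy : x ≠ y) {z : ι → S}
    (h₁ : (hammingGraph ι S).Adj x z) (h₂ : (hammingGraph ι S).Adj z y) :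
    z ∈ Set.range (update v k) := by
  obtain ⟨p, rfl⟩ := hx
  obtain ⟨q, rfl⟩ := hy
  obtain ⟨i₁, -, h₁⟩ := h₁
  obtain ⟨i₂, -, h₂⟩ := h₂
  refine ⟨z k, (eq_update_iff.2 ⟨rfl, fun l hl => ?_⟩).symm⟩
  have hk : k = i₁ ∨ k = i₂ := by
    by_contra! h
    exact hxy (congrArg (update v k) (by simpa using (h₁ k h.1).trans (h₂ k h.2)))
  rcases hk with rfl | rfl
  · simpa [hl] using (h₁ l hl).symm
  · simpa [hl] using h₂ l hl

end Hamming

theorem iff_of_forall_update_iff {ι α : Type*} [Finite ι] [DecidableEq ι]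
    {P : (ι → α) → Prop} (h : ∀ r k c, P (update r k c) ↔ P r) (r r' : ι → α) :
    P r ↔ P r' := by
  have := Fintype.ofFinite ι
  suffices ∀ s : Finset ι, ∀ r, (∀ l ∉ s, r l = r' l) → (P r ↔ P r') from
    this Finset.univ r (by simp)
  intro s
  induction s using Finset.induction_on with
  | empty => exact fun r hr => by rw [funext fun l => hr l (Finset.notMem_empty l)]
  | insert k s _ ih =>
    intro r hr
    rw [← h r k (r' k)]
    refine ih _ fun l hl => ?_
    rcases eq_or_ne l k with rfl | hlk
    · exact update_self ..
    · rw [update_of_ne hlk]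
      exact hr l (by simp [hlk, hl])

section Product

variable {ι S : Type*} [Finite ι] [DecidableEq ι] [Finite S] {Γ : Digraph (ι → S)}

theorem tdist_update_square (hwdr : Γ.IsWDR) (hcomm : Γ.IsCommutative)
    (hund : Γ.underlying = hammingGraph ι S) {u : ι → S} {j k : ι} (hjk : j ≠ k) {a b : S}
    (ha : a ≠ u j) (hb : b ≠ u k) :
    Γ.tdist (update u k b) (update (update u j a) k b) = Γ.tdist u (update u j a) ∨
      (Γ.tdist (update u k b) (update (update u j a) k b) = (Γ.tdist u (update u j a)).swap ∧
        Γ.tdist (update u j a) (update (update u j a) k b) = Γ.tdist u (update u j a)) := by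
  have hd₁ := Digraph.tdist_common_neighbours hwdr hcomm
    (hund ▸ hammingGraph_adj_and_adj_iff hjk ha hb)
  have hcommon := hammingGraph_adj_and_adj_iff (u := update u j a) hjk (a := u j)
    (by simpa using ha.symm) (by simpa [hjk.symm] using hb)
  simp only [update_idem, update_eq_self] at hcommon
  have hd₂ := Digraph.tdist_common_neighbours hwdr hcomm (hund ▸ hcommon)
  rw [Digraph.tdist_swap u, Digraph.tdist_swap (update u k b) (update (update u j a) k b)] at hd₂
  -- `A, B, D` are the types of `uv, vv', u'v'` for `v = u[j ↦ a]`, `u' = u[k ↦ b]`, `v' = v[k ↦ b]`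
  rcases hd₁ with ⟨hAB, -⟩ | ⟨hAD, -⟩
  · rcases hd₂ with ⟨-, hBD⟩ | ⟨hAD, -⟩
    · exact Or.inr ⟨by rw [hAB, hBD, Prod.swap_swap], hAB.symm⟩
    · exact Or.inl (Prod.swap_injective hAD).symm
  · exact Or.inl hAD.symm

-- `T p` is the type of the `p`-th rung of a ladder whose top rail is the `k`-line through `v`,
-- and `hT` is the square law `tdist_update_square` for two of its rungs.
theorem ladder_tdist_const (hq : 2 < Nat.card S) (hwdr : Γ.IsWDR) (hcomm : Γ.IsCommutative)
    (hund : Γ.underlying = hammingGraph ι S) {v : ι → S} {k : ι} {T : S → ℕ × ℕ}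
    (hT : ∀ p q, T q = T p ∨ (T q = (T p).swap ∧ Γ.tdist (update v k p) (update v k q) = T p))
    {p₀ : S} (hedge : (T p₀).1 = 1 ∨ (T p₀).2 = 1) (c : S) : T c = T p₀ := by
  set t := T p₀
  have hdich : ∀ p, T p = t ∨ T p = t.swap := fun p => (hT p₀ p).imp_right And.left
  obtain hct | hct := hdich c
  · exact hct
  by_cases hsymm : t.1 = t.2
  · exact hct.trans (Prod.ext hsymm.symm hsymm)
  exfalso
  have hcross : ∀ p q, T p = t → T q = t.swap → Γ.tdist (update v k p) (update v k q) = t := by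
    intro p q hp hq
    rcases hT p q with h' | ⟨-, h'⟩
    · exact absurd (hq.symm.trans (h'.trans hp)) fun h'' => hsymm (congrArg Prod.snd h'')
    · rwa [hp] at h'
  set Fs := {p | T p = t}
  set Bs := {p | T p = t.swap}
  have hunion : Fs ∪ Bs = Set.univ := Set.eq_univ_of_forall hdich
  have hrange : update v k '' Fs ∪ update v k '' Bs = Set.range (update v k) := by
    rw [← Set.image_union, hunion, Set.image_univ]
  have hclosed : ∀ x ∈ Set.range (update v k), ∀ y ∈ Set.range (update v k), x ≠ y →
      ∀ z, Γ.underlying.Adj x z → Γ.underlying.Adj z y → z ∈ Set.range (update v k) := by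
    rw [hund]
    exact fun x hx y hy hxy z => hammingGraph_mem_range_update hx hy hxy
  have hF := Digraph.subsingleton_of_forall_tdist_eq hwdr hcomm (F := update v k '' Fs)
    (B := update v k '' Bs) hedge hsymm (hrange ▸ hclosed)
    (by rintro _ ⟨p, hp, rfl⟩ _ ⟨q, hq, rfl⟩; exact hcross p q hp hq) ⟨_, c, hct, rfl⟩
  have hB := Digraph.subsingleton_of_forall_tdist_eq hwdr hcomm (F := update v k '' Bs)
    (B := update v k '' Fs) (t := t.swap) hedge.symm (Ne.symm hsymm)
    (Set.union_comm _ _ ▸ hrange ▸ hclosed)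
    (by rintro _ ⟨q, hq, rfl⟩ _ ⟨p, hp, rfl⟩; rw [Digraph.tdist_swap, hcross p q hp hq])
    ⟨_, p₀, rfl, rfl⟩
  have hFs := Set.ncard_le_one_iff_subsingleton.2
    (Set.subsingleton_of_image (update_injective v k) _ hF)
  have hBs := Set.ncard_le_one_iff_subsingleton.2
    (Set.subsingleton_of_image (update_injective v k) _ hB)
  have hcard := Set.ncard_union_le Fs Bs
  rw [hunion, Set.ncard_univ] at hcard
  omega

theorem adj_update_update (hq : 2 < Nat.card S) (hwdr : Γ.IsWDR) (hcomm : Γ.IsCommutative)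
    (hund : Γ.underlying = hammingGraph ι S) {u : ι → S} {j k : ι} (hjk : j ≠ k) {a : S}
    (h : Γ.Adj u (update u j a)) (c : S) :
    Γ.Adj (update u k c) (update (update u j a) k c) := by
  have ha : a ≠ u j := by
    rintro rfl
    exact Γ.loopless u (by rwa [update_eq_self] at h)
  set v := update u j a
  set T : S → ℕ × ℕ := fun p => Γ.tdist (update u k p) (update v k p)
  have hsquare : ∀ p q, T q = T p ∨
      (T q = (T p).swap ∧ Γ.tdist (update v k p) (update v k q) = T p) := by
    intro p q
    rcases eq_or_ne q p with rfl | hqp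
    · exact Or.inl rfl
    have := tdist_update_square hwdr hcomm hund (u := update u k p) hjk (b := q)
      (by simpa [hjk] using ha) (by simpa using hqp)
    simpa only [update_idem, update_comm hjk.symm p a u] using this
  have hT₀ : (T (u k)).1 = 1 := by
    have hvk : v k = u k := update_of_ne hjk.symm a u
    show Γ.dist (update u k (u k)) (update v k (u k)) = 1
    rw [update_eq_self, ← hvk, update_eq_self]
    exact Digraph.dist_eq_one_iff.2 h
  rw [← Digraph.dist_eq_one_iff]
  exact (congrArg Prod.fst (ladder_tdist_const hq hwdr hcomm hund hsquare (.inl hT₀) c)).trans hT₀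

theorem adj_update_update_iff (hq : 2 < Nat.card S) (hwdr : Γ.IsWDR)
    (hcomm : Γ.IsCommutative) (hund : Γ.underlying = hammingGraph ι S) (r : ι → S) (j k : ι)
    (a b c : S) :
    Γ.Adj (update (update r k c) j a) (update (update r k c) j b) ↔
      Γ.Adj (update r j a) (update r j b) := by
  rcases eq_or_ne j k with rfl | hjk
  · simp only [update_idem]
  have hmove : ∀ r c, Γ.Adj (update r j a) (update r j b) →
      Γ.Adj (update (update r k c) j a) (update (update r k c) j b) := by
    intro r c h
    have := adj_update_update hq hwdr hcomm hund (u := update r j a) hjk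
      (by rwa [update_idem]) c
    simpa only [update_idem, update_comm hjk] using this
  refine ⟨fun h => ?_, hmove r c⟩
  simpa only [update_idem, update_eq_self] using hmove _ (r k) h

theorem adj_update_iff_adj_update (hq : 2 < Nat.card S) (hwdr : Γ.IsWDR)
    (hcomm : Γ.IsCommutative) (hund : Γ.underlying = hammingGraph ι S) (r r' : ι → S) (j : ι)
    (a b : S) :
    Γ.Adj (update r j a) (update r j b) ↔ Γ.Adj (update r' j a) (update r' j b) :=
  iff_of_forall_update_iff (P := fun r => Γ.Adj (update r j a) (update r j b))
    (fun r k c => adj_update_update_iff hq hwdr hcomm hund r j k a b c) r r'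

theorem adj_iff_exists_adj_update (hq : 2 < Nat.card S) (hwdr : Γ.IsWDR)
    (hcomm : Γ.IsCommutative) (hund : Γ.underlying = hammingGraph ι S) (r : ι → S)
    {x y : ι → S} :
    Γ.Adj x y ↔ ∃ j, Γ.Adj (update r j (x j)) (update r j (y j)) ∧ ∀ l, l ≠ j → x l = y l := by
  have hcoord : ∀ j, (∀ l, l ≠ j → x l = y l) →
      (Γ.Adj x y ↔ Γ.Adj (update r j (x j)) (update r j (y j))) := by
    intro j hj
    rw [adj_update_iff_adj_update hq hwdr hcomm hund r x, update_eq_self,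
      update_eq_iff.2 ⟨rfl, hj⟩]
  constructor
  · intro h
    obtain ⟨j, -, hj⟩ : (hammingGraph ι S).Adj x y := hund ▸ Or.inl h
    exact ⟨j, (hcoord j hj).1 h, hj⟩
  · rintro ⟨j, h, hj⟩
    exact (hcoord j hj).2 h

end Product

theorem adj_iff_piBox_coordDigraph {S : Type*} [Finite S] {d : ℕ} {Γ : Digraph (Fin d → S)}
    (hq : 2 < Nat.card S) (hwdr : Γ.IsWDR) (hcomm : Γ.IsCommutative)
    (hund : Γ.underlying = hammingGraph (Fin d) S) (o : S) (x y : Fin d → S) :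
    Γ.Adj x y ↔ (piBox (Γ.coordDigraph o)).Adj x y :=
  adj_iff_exists_adj_update hq hwdr hcomm hund fun _ => o

theorem piBox_adj_update_iff {ι : Type*} [DecidableEq ι] {W : ι → Type*}
    (G : ∀ i, Digraph (W i)) {P Q : ∀ i, W i} {ℓ : ι} (hPQ : P ℓ = Q ℓ) (e f : W ℓ) :
    (piBox G).Adj (update P ℓ e) (update Q ℓ f) ↔
      (e = f ∧ (piBox G).Adj P Q) ∨ (P = Q ∧ (G ℓ).Adj e f) := by
  constructor
  · rintro ⟨j, hadj, hagree⟩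
    rcases eq_or_ne j ℓ with rfl | hjℓ
    · refine Or.inr ⟨funext fun l => ?_, by simpa using hadj⟩
      rcases eq_or_ne l j with rfl | hl
      · exact hPQ
      · simpa [hl] using hagree l hl
    · refine Or.inl ⟨by simpa using hagree ℓ hjℓ.symm, j, by simpa [hjℓ] using hadj,
        fun l hl => ?_⟩
      rcases eq_or_ne l ℓ with rfl | hlℓ
      · exact hPQ
      · simpa [hlℓ] using hagree l hl
  · rintro (⟨rfl, j, hadj, hagree⟩ | ⟨rfl, hadj⟩)
    · have hjℓ : j ≠ ℓ := by
        rintro rfl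
        exact (G j).loopless _ (hPQ ▸ hadj)
      refine ⟨j, by simpa [hjℓ] using hadj, fun l hl => ?_⟩
      rcases eq_or_ne l ℓ with rfl | hlℓ
      · simp
      · simpa [hlℓ] using hagree l hl
    · exact ⟨ℓ, by simpa using hadj, fun l hl => by simp [hl]⟩

theorem pad_snoc {S : Type*} (o : S) {m d : ℕ} (hm : m < d) (α : Fin m → S) (e : S) :
    pad o d (m + 1) (Fin.snoc α e) = update (pad o d m α) ⟨m, hm⟩ e := by
  funext l
  rcases eq_or_ne l ⟨m, hm⟩ with rfl | hl
  · simp [pad, Fin.snoc]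
  · have : l.val ≠ m := fun h => hl (Fin.ext h)
    rw [update_of_ne hl]
    simp only [pad, Fin.snoc]
    split_ifs <;> first | rfl | omega

theorem pad_injective {S : Type*} (o : S) {m d : ℕ} (hm : m ≤ d) : Injective (pad o d m) :=
  fun α β h => funext fun l => by simpa [pad, l.2] using congrFun h ⟨l, l.2.trans_le hm⟩

theorem Digraph.trunc_adj {S : Type*} {d : ℕ} (Γ : Digraph (Fin d → S)) (o : S) (m : ℕ)
    (α β : Fin m → S) : (Γ.trunc o m).Adj α β ↔ Γ.Adj (pad o d m α) (pad o d m β) :=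
  Iff.rfl

end Paper

open Paper in
/-- **Lemma 4.6.** If `q > 2`, then `Γ^{[i]} = Γ^{[i−1]} □ Γ^i` for `2 ≤ i ≤ d`:
writing `i = i' + 1`, an arc of `Γ^{[i]}` between `(α,e)` and `(β,f)` exists iff
`e = f` and `(α,β)` is an arc of `Γ^{[i−1]}`, or `α = β` and `(e,f)` is an arc of
`Γ^i`. -/
theorem lemma_product {S : Type*} [Finite S] {d : ℕ}
    (Γ : Paper.Digraph (Fin d → S)) (hq : 2 < Nat.card S)
    (hwdr : Γ.IsWDR) (hcomm : Γ.IsCommutative)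
    (hund : Γ.underlying = hammingGraph (Fin d) S)
    (o : S) (i' : ℕ) (h2 : i' + 1 ≤ d) :
    ∀ (α β : Fin i' → S) (e f : S),
      (Γ.trunc o (i' + 1)).Adj (Fin.snoc α e) (Fin.snoc β f) ↔
        ((e = f ∧ (Γ.trunc o i').Adj α β) ∨
          (α = β ∧ (Γ.coordDigraph o ⟨i', by omega⟩).Adj e f)) := by
  intro α β e f
  have hprod := adj_iff_piBox_coordDigraph hq hwdr hcomm hund o
  have hlast : pad o d i' α ⟨i', h2⟩ = pad o d i' β ⟨i', h2⟩ := by simp [pad]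
  rw [Digraph.trunc_adj, Digraph.trunc_adj, pad_snoc o h2, pad_snoc o h2, hprod, hprod,
    piBox_adj_update_iff _ hlast, (pad_injective o (Nat.le_of_succ_le h2)).eq_iff]
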